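/- (Semantic core of the completeness of the independence axioms.) Let M be a set, let Σ be a set of pairs (z,w) of finite subsets of M (independence assertions), and let x, y be finite subsets of M. If the independence x ⊥ y holds under every relational diversity rank function on M under which every assertion of Σ holds, then x ⊥ y holds under every diversity rank function on M under which every assertion of Σ holds. Here a rank function rk satisfies the assertion (z,w) iff rk(z ∪ w) = rk(z) + rk(w). -/

import Mathlib

/-- `rk` is a diversity rank function: it maps finite sets to nonnegative reals and
satisfies axioms R1--R4. -/
def IsDivRank {α : Type*} [DecidableEq α] (rk : Finset α → ℝ) : Prop :=
  (∀ x : Finset α, 0 ≤ rk x) ∧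
  rk ∅ = 0 ∧
  (∀ x y : Finset α, rk x ≤ rk (x ∪ y) ∧ rk (x ∪ y) ≤ rk x + rk y) ∧
  (∀ x y z : Finset α, rk (x ∪ y) = rk x → rk (x ∪ y ∪ z) = rk (x ∪ z)) ∧
  (∀ x y z : Finset α, rk (x ∪ y ∪ z) = rk x + rk (y ∪ z) → rk (x ∪ y) = rk x + rk y)

/-- The relational diversity rank induced by a team `X` of assignments `α → β`:
`rk_X(x) = log₂ |{s↾x : s ∈ X}|`. -/
noncomputable def relRank {α : Type*} {β : Type*} (X : Finset (α → β)) (x : Finset α) : ℝ :=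
  Real.logb 2 (Set.ncard ((↑x : Set α).restrict '' (↑X : Set (α → β))))

/-!
Suppose `x ⊥ y` fails for `rk` and take `a ⊆ x`, `b ⊆ y` minimal with `a ⊥ b` failing. By R3 an
element of rank zero could be dropped from `a` and `b`, so every element of `a ∪ b` has nonzero
rank, whereas an element shared by an independent pair has rank zero. If `a` and `b` share an
element `v`, the team of all 0/1 assignments to `v` (constant elsewhere) satisfies `Σ` but not
`x ⊥ y`. Otherwise use the team of 0/1 assignments supported on `K = a ∪ b` with an even number of
ones: on `s` it has rank `|s ∩ K|` unless `K ⊆ s`, where the rank drops below `|K|`. So it violates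
`x ⊥ y`, and it satisfies `Σ` because, by minimality of `(a, b)` and the rules R2 and R4, an
independent pair covering `K` contains `K` on one side.
-/

open Finset

section RankFunction

variable {α : Type*} [DecidableEq α]

def Indep (rk : Finset α → ℝ) (a b : Finset α) : Prop :=
  rk (a ∪ b) = rk a + rk b

variable {rk : Finset α → ℝ} {a b c a' b' p q r s z w : Finset α}

namespace Indep

theorem symm (h : Indep rk a b) : Indep rk b a := by
  rw [Indep, union_comm, h, add_comm]

theorem empty_left (hrk : IsDivRank rk) (b : Finset α) : Indep rk ∅ b := by
  simp [Indep, hrk.2.1]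

theorem mono_right (hrk : IsDivRank rk) (h : Indep rk a b) (hb : b' ⊆ b) : Indep rk a b' :=
  hrk.2.2.2.2 a b' b (by rwa [union_assoc, union_eq_right.2 hb])

theorem mono (hrk : IsDivRank rk) (h : Indep rk a b) (ha : a' ⊆ a) (hb : b' ⊆ b) :
    Indep rk a' b' :=
  ((h.mono_right hrk hb).symm.mono_right hrk ha).symm

theorem exchange (hrk : IsDivRank rk) (hab : Indep rk a b) (habc : Indep rk (a ∪ b) c) :
    Indep rk a (b ∪ c) := by
  refine le_antisymm (hrk.2.2.1 a (b ∪ c)).2 ?_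
  have hbc := (hrk.2.2.1 b c).2
  unfold Indep at *
  rw [← union_assoc, habc, hab]
  linarith

theorem rk_singleton_eq_zero (hrk : IsDivRank rk) (h : Indep rk a b) {v : α} (ha : v ∈ a)
    (hb : v ∈ b) : rk {v} = 0 := by
  have hv := h.mono hrk (singleton_subset_iff.2 ha) (singleton_subset_iff.2 hb)
  rw [Indep, union_self] at hv
  linarith

theorem union_union (hrk : IsDivRank rk) (h : Indep rk (p ∪ q) (r ∪ s)) (hrs : Indep rk r s)
    (hprq : Indep rk (p ∪ r) q) : Indep rk (p ∪ r) (q ∪ s) := by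
  have hs : Indep rk s (r ∪ (p ∪ q)) :=
    hrs.symm.exchange hrk (by rw [union_comm s r]; exact h.symm)
  refine hprq.exchange hrk ?_
  rw [union_comm p r, union_assoc]
  exact hs.symm

end Indep

theorem IsDivRank.rk_erase_of_rk_singleton_eq_zero (hrk : IsDivRank rk) {v : α} (hv : rk {v} = 0)
    (s : Finset α) : rk (s.erase v) = rk s := by
  have hinsert := hrk.2.2.2.1 ∅ {v} (s.erase v) (by rw [empty_union, hv, hrk.2.1])
  rw [empty_union, empty_union, ← insert_eq] at hinsert
  by_cases hvs : v ∈ s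
  · rw [← hinsert, insert_erase hvs]
  · rw [erase_eq_of_notMem hvs]

def IsMinDep (rk : Finset α → ℝ) (a b : Finset α) : Prop :=
  ¬ Indep rk a b ∧ ∀ a' ⊆ a, ∀ b' ⊆ b, ¬ Indep rk a' b' → a' = a ∧ b' = b

theorem exists_isMinDep (h : ¬ Indep rk a b) : ∃ a' ⊆ a, ∃ b' ⊆ b, IsMinDep rk a' b' := by
  classical
  set S := (a.powerset ×ˢ b.powerset).filter fun p => ¬ Indep rk p.1 p.2
  obtain ⟨⟨a', b'⟩, hS, hmin⟩ :=
    exists_min_image S (fun p => p.1.card + p.2.card) ⟨(a, b), by simp [S, h]⟩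
  simp only [S, mem_filter, mem_product, mem_powerset] at hS hmin
  refine ⟨a', hS.1.1, b', hS.1.2, hS.2, fun a'' ha'' b'' hb'' hdep => ?_⟩
  have hle : a'.card + b'.card ≤ a''.card + b''.card :=
    hmin (a'', b'') ⟨⟨ha''.trans hS.1.1, hb''.trans hS.1.2⟩, hdep⟩
  have ha := card_le_card ha''
  have hb := card_le_card hb''
  exact ⟨eq_of_subset_of_card_le ha'' (by omega), eq_of_subset_of_card_le hb'' (by omega)⟩

namespace IsMinDep

theorem symm (h : IsMinDep rk a b) : IsMinDep rk b a :=
  ⟨fun hba => h.1 hba.symm, fun b' hb a' ha hdep =>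
    (h.2 a' ha b' hb fun hab => hdep hab.symm).symm⟩

theorem nonempty_right (hrk : IsDivRank rk) (h : IsMinDep rk a b) : b.Nonempty := by
  rw [nonempty_iff_ne_empty]
  rintro rfl
  exact h.1 (Indep.empty_left hrk a).symm

theorem rk_singleton_ne_zero (hrk : IsDivRank rk) (h : IsMinDep rk a b) {v : α}
    (hv : v ∈ a ∪ b) : rk {v} ≠ 0 := by
  intro hv0
  have hdep : ¬ Indep rk (a.erase v) (b.erase v) := by
    rw [Indep, ← erase_union_distrib]
    simp only [hrk.rk_erase_of_rk_singleton_eq_zero hv0]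
    exact h.1
  obtain ⟨ha, hb⟩ := h.2 _ (erase_subset v a) _ (erase_subset v b) hdep
  rcases mem_union.1 hv with hva | hvb
  · exact erase_eq_self.1 ha hva
  · exact erase_eq_self.1 hb hvb

theorem subset_right_of_inter_nonempty (hrk : IsDivRank rk) (h : IsMinDep rk a b)
    (hzw : Indep rk z w) (hcover : a ∪ b ⊆ z ∪ w) (hbw : (b ∩ w).Nonempty) : a ∪ b ⊆ w := by
  by_contra hw
  -- split `a` and `b` along `w`; the parts outside `w` lie in `z`
  have hsplit : Indep rk ((a \ w) ∪ (b \ w)) ((a ∩ w) ∪ (b ∩ w)) := by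
    refine hzw.mono hrk ?_ (union_subset inter_subset_right inter_subset_right)
    rw [← union_sdiff_distrib]
    exact fun v hv => (mem_union.1 (hcover (sdiff_subset hv))).resolve_right (mem_sdiff.1 hv).2
  have hw' : Indep rk (a ∩ w) (b ∩ w) := by
    by_contra hdep
    obtain ⟨ha, hb⟩ := h.2 _ inter_subset_left _ inter_subset_left hdep
    exact hw (union_subset (inter_eq_left.1 ha) (inter_eq_left.1 hb))
  have hb : Indep rk a (b \ w) := by
    by_contra hdep
    obtain ⟨v, hv⟩ := hbw
    have hvb := (h.2 _ subset_rfl _ sdiff_subset hdep).2 ▸ (mem_inter.1 hv).1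
    exact (mem_sdiff.1 hvb).2 (mem_inter.1 hv).2
  have hab := hsplit.union_union hrk hw' (by rwa [sdiff_union_inter])
  rw [sdiff_union_inter, sdiff_union_inter] at hab
  exact h.1 hab

theorem subset_or_subset (hrk : IsDivRank rk) (h : IsMinDep rk a b) (hzw : Indep rk z w)
    (hcover : a ∪ b ⊆ z ∪ w) : a ∪ b ⊆ z ∨ a ∪ b ⊆ w := by
  rcases (b ∩ w).eq_empty_or_nonempty with hbw | hbw
  · obtain ⟨v, hv⟩ := h.nonempty_right hrk
    have hvz : v ∈ z := (mem_union.1 (hcover (mem_union_right a hv))).resolve_right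
      fun hvw => eq_empty_iff_forall_notMem.1 hbw v (mem_inter.2 ⟨hv, hvw⟩)
    exact Or.inl (h.subset_right_of_inter_nonempty hrk hzw.symm (by rwa [union_comm w])
      ⟨v, mem_inter.2 ⟨hv, hvz⟩⟩)
  · exact Or.inr (h.subset_right_of_inter_nonempty hrk hzw hcover hbw)

theorem disjoint_inter_of_indep (hrk : IsDivRank rk) (h : IsMinDep rk a b) (hzw : Indep rk z w)
    {K : Finset α} (hK : K ⊆ a ∪ b) : Disjoint (K ∩ z) (K ∩ w) :=
  disjoint_left.2 fun _ hvz hvw => h.rk_singleton_ne_zero hrk (hK (mem_inter.1 hvz).1)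
    (hzw.rk_singleton_eq_zero hrk (mem_inter.1 hvz).2 (mem_inter.1 hvw).2)

end IsMinDep

end RankFunction

theorem logb_two_two_pow (n : ℕ) : Real.logb 2 ((2 ^ n : ℕ) : ℝ) = n := by
  rw [Nat.cast_pow, Nat.cast_ofNat, Real.logb_pow, Real.logb_self_eq_one one_lt_two, mul_one]

section Team

universe u

variable {α : Type*}

theorem relRank_eq_logb_ncard {β : Type*} (X : Finset (α → β)) (s : Finset α) :
    relRank X s = Real.logb 2 (Set.ncard (Set.domRestrict (↑s : Set α) '' (↑X : Set (α → β)))) :=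
  rfl

theorem relRank_mono {β : Type*} {X : Finset (α → β)} (hX : X.Nonempty) {s t : Finset α}
    (hst : s ⊆ t) : relRank X s ≤ relRank X t := by
  have hfin : (Set.domRestrict (↑t : Set α) '' (↑X : Set (α → β))).Finite :=
    X.finite_toSet.image _
  have himg : Set.domRestrict (↑s : Set α) '' (↑X : Set (α → β)) =
      Set.domRestrict₂ (π := fun _ => β) (coe_subset.2 hst) ''
        (Set.domRestrict (↑t : Set α) '' (↑X : Set (α → β))) := by
    rw [Set.image_image]
    rfl
  rw [relRank_eq_logb_ncard, relRank_eq_logb_ncard]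
  refine Real.logb_le_logb_of_le one_lt_two ?_ ?_
  · exact_mod_cast (Set.ncard_pos (X.finite_toSet.image _)).2 ((coe_nonempty.2 hX).image _)
  · rw [himg]
    exact_mod_cast Set.ncard_image_le hfin

def evenSubsets (K : Finset α) : Finset (Finset α) :=
  K.powerset.filter fun T => Even T.card

theorem empty_mem_evenSubsets (K : Finset α) : ∅ ∈ evenSubsets K :=
  mem_filter.2 ⟨empty_mem_powerset K, by simp⟩

theorem card_evenSubsets_lt {K : Finset α} (hK : K.Nonempty) :
    (evenSubsets K).card < 2 ^ K.card := by
  obtain ⟨v, hv⟩ := hK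
  rw [← card_powerset]
  exact card_lt_card (filter_ssubset.2 ⟨{v}, by simpa using hv, by simp⟩)

variable [DecidableEq α]

def indicatorAssignment (T : Finset α) : α → ULift.{u} Bool :=
  fun v => ULift.up (decide (v ∈ T))

theorem restrict_indicatorAssignment_eq_iff {s T T' : Finset α} :
    Set.domRestrict (↑s : Set α) (indicatorAssignment.{u} T) =
        Set.domRestrict (↑s : Set α) (indicatorAssignment.{u} T') ↔ T ∩ s = T' ∩ s := by
  simp [funext_iff, indicatorAssignment, Finset.ext_iff]

open scoped Classical in
noncomputable def indicatorTeam (𝒯 : Finset (Finset α)) : Finset (α → ULift.{u} Bool) :=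
  𝒯.image indicatorAssignment

theorem relRank_indicatorTeam (𝒯 : Finset (Finset α)) (s : Finset α) :
    relRank (indicatorTeam.{u} 𝒯) s = Real.logb 2 (𝒯.image (· ∩ s)).card := by
  classical
  set φ : Finset α → (↑(↑s : Set α) → ULift.{u} Bool) :=
    fun T => Set.domRestrict (↑s : Set α) (indicatorAssignment T)
  have himg : Set.domRestrict (π := fun _ => ULift.{u} Bool) (↑s : Set α) ''
      ↑(indicatorTeam.{u} 𝒯) = φ '' ↑(𝒯.image (· ∩ s)) := by
    rw [indicatorTeam, coe_image, coe_image, Set.image_image, Set.image_image]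
    exact Set.image_congr fun T _ =>
      (restrict_indicatorAssignment_eq_iff.2 (by rw [inter_assoc, inter_self])).symm
  have hinj : Set.InjOn φ ↑(𝒯.image (· ∩ s)) := by
    simp only [coe_image]
    rintro _ ⟨T, -, rfl⟩ _ ⟨T', -, rfl⟩ hTT'
    simpa [inter_assoc] using restrict_indicatorAssignment_eq_iff.1 hTT'
  rw [relRank_eq_logb_ncard, himg, hinj.ncard_image, Set.ncard_coe_finset]

variable {K L s x y z w a b : Finset α}

theorem image_inter_powerset (L s : Finset α) : L.powerset.image (· ∩ s) = (L ∩ s).powerset := by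
  ext T
  simp only [mem_image, mem_powerset]
  constructor
  · rintro ⟨U, hU, rfl⟩
    exact inter_subset_inter_right hU
  · exact fun hT => ⟨T, hT.trans inter_subset_left, inter_eq_left.2 (hT.trans inter_subset_right)⟩

noncomputable def freeTeam (L : Finset α) : Finset (α → ULift.{u} Bool) :=
  indicatorTeam L.powerset

theorem freeTeam_nonempty (L : Finset α) : (freeTeam.{u} L).Nonempty := by
  classical
  exact ⟨_, mem_image_of_mem _ (empty_mem_powerset L)⟩

theorem relRank_freeTeam (L s : Finset α) : relRank (freeTeam.{u} L) s = (L ∩ s).card := by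
  rw [freeTeam, relRank_indicatorTeam, image_inter_powerset, card_powerset, logb_two_two_pow]

theorem relRank_freeTeam_union (h : Disjoint (L ∩ z) (L ∩ w)) :
    relRank (freeTeam.{u} L) (z ∪ w) =
      relRank (freeTeam.{u} L) z + relRank (freeTeam.{u} L) w := by
  simp only [relRank_freeTeam, inter_union_distrib_left, card_union_of_disjoint h, Nat.cast_add]

theorem image_inter_evenSubsets_of_subset (h : K ⊆ s) :
    (evenSubsets K).image (· ∩ s) = evenSubsets K := by
  refine (image_congr fun T hT => ?_).trans image_id
  exact inter_eq_left.2 ((mem_powerset.1 (mem_filter.1 hT).1).trans h)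

theorem image_inter_evenSubsets_of_not_subset (h : ¬ K ⊆ s) :
    (evenSubsets K).image (· ∩ s) = (K ∩ s).powerset := by
  obtain ⟨v, hvK, hvs⟩ := not_subset.1 h
  refine (image_subset_iff.2 fun T hT => ?_).antisymm fun T hT => ?_
  · exact mem_powerset.2 (inter_subset_inter_right (mem_powerset.1 (mem_filter.1 hT).1))
  · rw [mem_powerset, subset_inter_iff] at hT
    have hvT : v ∉ T := fun hvT => hvs (hT.2 hvT)
    rw [mem_image]
    -- toggling `v ∉ s` fixes the parity without changing the trace on `s`
    by_cases hT_even : Even T.card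
    · exact ⟨T, mem_filter.2 ⟨mem_powerset.2 hT.1, hT_even⟩, inter_eq_left.2 hT.2⟩
    · refine ⟨insert v T, mem_filter.2 ⟨mem_powerset.2 (insert_subset hvK hT.1), ?_⟩, ?_⟩
      · rw [card_insert_of_notMem hvT, Nat.even_add_one]
        exact hT_even
      · rw [insert_inter_of_notMem hvs, inter_eq_left.2 hT.2]

noncomputable def parityTeam (K : Finset α) : Finset (α → ULift.{u} Bool) :=
  indicatorTeam (evenSubsets K)

theorem parityTeam_nonempty (K : Finset α) : (parityTeam.{u} K).Nonempty := by
  classical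
  exact ⟨_, mem_image_of_mem _ (empty_mem_evenSubsets K)⟩

theorem relRank_parityTeam_of_subset (h : K ⊆ s) :
    relRank (parityTeam.{u} K) s = Real.logb 2 (evenSubsets K).card := by
  rw [parityTeam, relRank_indicatorTeam, image_inter_evenSubsets_of_subset h]

theorem relRank_parityTeam_of_not_subset (h : ¬ K ⊆ s) :
    relRank (parityTeam.{u} K) s = (K ∩ s).card := by
  rw [parityTeam, relRank_indicatorTeam, image_inter_evenSubsets_of_not_subset h, card_powerset,
    logb_two_two_pow]

theorem relRank_parityTeam_union_of_subset_left (hK : K.Nonempty)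
    (h : Disjoint (K ∩ z) (K ∩ w)) (hz : K ⊆ z) :
    relRank (parityTeam.{u} K) (z ∪ w) =
      relRank (parityTeam.{u} K) z + relRank (parityTeam.{u} K) w := by
  rw [inter_eq_left.2 hz] at h
  have hKw : K ∩ w = ∅ := (disjoint_self_iff_empty _).1 (h.mono_left inter_subset_left)
  have hw : ¬ K ⊆ w := fun hw => hK.ne_empty (by rwa [inter_eq_left.2 hw] at hKw)
  rw [relRank_parityTeam_of_subset (hz.trans subset_union_left), relRank_parityTeam_of_subset hz,
    relRank_parityTeam_of_not_subset hw, hKw, card_empty, Nat.cast_zero, add_zero]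

theorem relRank_parityTeam_union (hK : K.Nonempty) (h : Disjoint (K ∩ z) (K ∩ w))
    (hcover : K ⊆ z ∪ w → K ⊆ z ∨ K ⊆ w) :
    relRank (parityTeam.{u} K) (z ∪ w) =
      relRank (parityTeam.{u} K) z + relRank (parityTeam.{u} K) w := by
  by_cases hz : K ⊆ z
  · exact relRank_parityTeam_union_of_subset_left hK h hz
  by_cases hw : K ⊆ w
  · rw [union_comm, add_comm]
    exact relRank_parityTeam_union_of_subset_left hK h.symm hw
  have hzw : ¬ K ⊆ z ∪ w := fun hzw => (hcover hzw).elim hz hw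
  simp only [relRank_parityTeam_of_not_subset, hz, hw, hzw, not_false_eq_true,
    inter_union_distrib_left, card_union_of_disjoint h, Nat.cast_add]

theorem relRank_freeTeam_singleton_union_lt {v : α} (hx : v ∈ x) (hy : v ∈ y) :
    relRank (freeTeam.{u} {v}) (x ∪ y) <
      relRank (freeTeam.{u} {v}) x + relRank (freeTeam.{u} {v}) y := by
  simp [relRank_freeTeam, singleton_inter_of_mem, hx, hy]

theorem relRank_parityTeam_union_lt (ha : a.Nonempty) (hb : b.Nonempty) (hab : Disjoint a b)
    (hax : a ⊆ x) (hby : b ⊆ y) :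
    relRank (parityTeam.{u} (a ∪ b)) (x ∪ y) <
      relRank (parityTeam.{u} (a ∪ b)) x + relRank (parityTeam.{u} (a ∪ b)) y := by
  have hK : (a ∪ b).Nonempty := ha.mono subset_union_left
  have hpos : (0 : ℝ) < (evenSubsets (a ∪ b)).card := by
    exact_mod_cast card_pos.2 ⟨∅, empty_mem_evenSubsets _⟩
  have ha' : relRank (parityTeam.{u} (a ∪ b)) a = a.card := by
    obtain ⟨v, hv⟩ := hb
    rw [relRank_parityTeam_of_not_subset, union_inter_cancel_left]
    exact fun h => disjoint_left.1 hab (h (mem_union_right a hv)) hv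
  have hb' : relRank (parityTeam.{u} (a ∪ b)) b = b.card := by
    obtain ⟨v, hv⟩ := ha
    rw [relRank_parityTeam_of_not_subset, union_inter_cancel_right]
    exact fun h => disjoint_left.1 hab hv (h (mem_union_left b hv))
  calc relRank (parityTeam.{u} (a ∪ b)) (x ∪ y)
      = Real.logb 2 (evenSubsets (a ∪ b)).card :=
        relRank_parityTeam_of_subset (union_subset_union hax hby)
    _ < Real.logb 2 ((2 ^ (a ∪ b).card : ℕ) : ℝ) :=
        Real.logb_lt_logb one_lt_two hpos (by exact_mod_cast card_evenSubsets_lt hK)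
    _ = relRank (parityTeam.{u} (a ∪ b)) a + relRank (parityTeam.{u} (a ∪ b)) b := by
        rw [logb_two_two_pow, ha', hb', card_union_of_disjoint hab, Nat.cast_add]
    _ ≤ _ := add_le_add (relRank_mono (parityTeam_nonempty _) hax)
        (relRank_mono (parityTeam_nonempty _) hby)

end Team

/-- If `x ⊥ y` holds under every relational diversity rank function satisfying all
independence assertions of `Σ`, then it holds under every diversity rank function
satisfying all assertions of `Σ`. -/
theorem indep_completeness {α : Type*} [DecidableEq α]
    (Sig : Set (Finset α × Finset α)) (x y : Finset α)
    (h : ∀ (β : Type*) (X : Finset (α → β)), X.Nonempty →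
      (∀ p ∈ Sig, relRank X (p.1 ∪ p.2) = relRank X p.1 + relRank X p.2) →
      relRank X (x ∪ y) = relRank X x + relRank X y) :
    ∀ rk : Finset α → ℝ, IsDivRank rk →
      (∀ p ∈ Sig, rk (p.1 ∪ p.2) = rk p.1 + rk p.2) →
      rk (x ∪ y) = rk x + rk y := by
  intro rk hrk hSig
  by_contra hxy
  obtain ⟨a, hax, b, hby, hmin⟩ := exists_isMinDep hxy
  rcases (a ∩ b).eq_empty_or_nonempty with hab | ⟨v, hv⟩
  · have ha := hmin.symm.nonempty_right hrk
    have hb := hmin.nonempty_right hrk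
    refine (relRank_parityTeam_union_lt ha hb (disjoint_iff_inter_eq_empty.2 hab) hax hby).ne
      (h _ _ (parityTeam_nonempty _) fun p hp => ?_)
    exact relRank_parityTeam_union (hb.mono subset_union_right)
      (hmin.disjoint_inter_of_indep hrk (hSig p hp) subset_rfl)
      (hmin.subset_or_subset hrk (hSig p hp))
  · obtain ⟨hva, hvb⟩ := mem_inter.1 hv
    refine (relRank_freeTeam_singleton_union_lt (hax hva) (hby hvb)).ne
      (h _ _ (freeTeam_nonempty _) fun p hp => ?_)
    exact relRank_freeTeam_union (hmin.disjoint_inter_of_indep hrk (hSig p hp)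
      (singleton_subset_iff.2 (mem_union_left b hva)))
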